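/- arXiv:2401.11205 — 2 statements merged into one kernel-verified Lean document; each statement's English description precedes it below -/
import Mathlib

section
/- For any x, v ∈ ℝ^N with 0 ≤ xᵢ ≤ 1 for all i and ‖2v - 1‖₂² ≤ N, one has ⟨2x - 1, 2v - 1⟩ ≤ N, with equality if and only if x ∈ {0,1}^N and x = v. -/
/-!
Put `a = 2x - 1` and `b = 2v - 1`, so that `aᵢ² ≤ 1` and `∑ bᵢ² ≤ N`. Coordinatewise
`1 + bᵢ² - 2 aᵢ bᵢ = (1 - aᵢ²) + (aᵢ - bᵢ)² ≥ 0`, hence `⟪a, b⟫ ≤ (N + ‖b‖²) / 2 ≤ N`.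
Equality forces every `aᵢ = bᵢ` with `aᵢ² = 1`, i.e. `xᵢ ∈ {0, 1}` and `x = v`.
-/

open Finset

lemma one_add_sq_sub_two_mul_eq (a b : ℝ) :
    1 + b ^ 2 - 2 * (a * b) = (1 - a ^ 2) + (a - b) ^ 2 := by
  ring

lemma mul_le_one_add_sq_div_two {a : ℝ} (b : ℝ) (ha : a ^ 2 ≤ 1) :
    a * b ≤ (1 + b ^ 2) / 2 := by
  nlinarith [one_add_sq_sub_two_mul_eq a b, sq_nonneg (a - b)]

lemma mul_eq_one_add_sq_div_two_iff {a b : ℝ} (ha : a ^ 2 ≤ 1) :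
    a * b = (1 + b ^ 2) / 2 ↔ a = b ∧ a ^ 2 = 1 := by
  have hgap := one_add_sq_sub_two_mul_eq a b
  constructor
  · intro h
    have hsum : (1 - a ^ 2) + (a - b) ^ 2 = 0 := by linarith
    obtain ⟨h₁, h₂⟩ := (add_eq_zero_iff_of_nonneg (by linarith) (sq_nonneg _)).1 hsum
    exact ⟨sub_eq_zero.1 (pow_eq_zero_iff two_ne_zero |>.1 h₂), by linarith⟩
  · rintro ⟨rfl, h⟩
    rw [← sq, h]
    norm_num

section UnitBox

variable {ι : Type*} [Fintype ι] {a b : ι → ℝ}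

lemma sum_one_add_sq_div_two (b : ι → ℝ) :
    ∑ i, (1 + b i ^ 2) / 2 = (Fintype.card ι + ∑ i, b i ^ 2) / 2 := by
  rw [← sum_div, sum_add_distrib, sum_const, card_univ, nsmul_one]

lemma sum_mul_le_card (ha : ∀ i, a i ^ 2 ≤ 1) (hb : ∑ i, b i ^ 2 ≤ Fintype.card ι) :
    ∑ i, a i * b i ≤ Fintype.card ι :=
  calc ∑ i, a i * b i ≤ ∑ i, (1 + b i ^ 2) / 2 :=
        sum_le_sum fun i _ => mul_le_one_add_sq_div_two (b i) (ha i)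
    _ = (Fintype.card ι + ∑ i, b i ^ 2) / 2 := sum_one_add_sq_div_two b
    _ ≤ Fintype.card ι := by linarith

lemma sum_mul_eq_card_iff (ha : ∀ i, a i ^ 2 ≤ 1) (hb : ∑ i, b i ^ 2 ≤ Fintype.card ι) :
    ∑ i, a i * b i = Fintype.card ι ↔ ∀ i, a i = b i ∧ a i ^ 2 = 1 := by
  have hpoint : ∀ i ∈ univ, a i * b i ≤ (1 + b i ^ 2) / 2 :=
    fun i _ => mul_le_one_add_sq_div_two (b i) (ha i)
  constructor
  · intro heq i
    have hsq : ∑ i, (1 + b i ^ 2) / 2 = (Fintype.card ι : ℝ) := by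
      have := sum_le_sum hpoint
      rw [sum_one_add_sq_div_two] at this ⊢
      linarith
    have hall := (sum_eq_sum_iff_of_le hpoint).1 (heq.trans hsq.symm)
    exact (mul_eq_one_add_sq_div_two_iff (ha i)).1 (hall i (mem_univ i))
  · intro h
    calc ∑ i, a i * b i = ∑ _i : ι, (1 : ℝ) :=
          sum_congr rfl fun i _ => by rw [← (h i).1, ← sq, (h i).2]
      _ = Fintype.card ι := by simp

end UnitBox

lemma two_mul_sub_one_sq_le_one {x : ℝ} (h₀ : 0 ≤ x) (h₁ : x ≤ 1) : (2 * x - 1) ^ 2 ≤ 1 := by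
  nlinarith

lemma two_mul_sub_one_sq_eq_one_iff {x : ℝ} : (2 * x - 1) ^ 2 = 1 ↔ x = 0 ∨ x = 1 := by
  have : (2 * x - 1) ^ 2 - 1 = 4 * (x * (x - 1)) := by ring
  rw [← sub_eq_zero, this, mul_eq_zero, mul_eq_zero, sub_eq_zero]
  norm_num

theorem stmt_1 (N : ℕ) (x v : Fin N → ℝ)
    (hx : ∀ i, 0 ≤ x i ∧ x i ≤ 1)
    (hv : ∑ i, (2 * v i - 1) ^ 2 ≤ (N : ℝ)) :
    ∑ i, (2 * x i - 1) * (2 * v i - 1) ≤ (N : ℝ) ∧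
    (∑ i, (2 * x i - 1) * (2 * v i - 1) = (N : ℝ) ↔
      (∀ i, x i = 0 ∨ x i = 1) ∧ x = v) := by
  have ha : ∀ i, (2 * x i - 1) ^ 2 ≤ 1 := fun i => two_mul_sub_one_sq_le_one (hx i).1 (hx i).2
  have hN : (N : ℝ) = Fintype.card (Fin N) := by simp
  rw [hN] at hv ⊢
  refine ⟨sum_mul_le_card ha hv, ?_⟩
  rw [sum_mul_eq_card_iff ha hv, forall_and, funext_iff]
  simp only [sub_left_inj, mul_eq_mul_left_iff, two_ne_zero, or_false, two_mul_sub_one_sq_eq_one_iff]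
  exact and_comm
end

section
/- Let M be an M×M Hermitian positive definite matrix, h ∈ ℂ^{1×M} a nonzero row vector, P an invertible diagonal matrix, and σ² > 0. Define Δ = (h P M⁻² Pᴴ hᴴ)/(σ² + h P M⁻¹ Pᴴ hᴴ). Then Tr((M + σ⁻² Pᴴ hᴴ h P)⁻¹) = Tr(M⁻¹) − Δ, and Δ > 0. -/
open scoped ComplexOrder

open Matrix

section aux

set_option linter.unusedSectionVars false

variable {n : Type*} [Fintype n] [DecidableEq n]

lemma mul_vecMulVec' (A : Matrix n n ℂ) (u v : n → ℂ) :
    A * vecMulVec u v = vecMulVec (A *ᵥ u) v := by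
  ext i j
  simp only [Matrix.mul_apply, vecMulVec_apply, mulVec, dotProduct]
  rw [Finset.sum_mul]
  exact Finset.sum_congr rfl fun k _ => by ring

lemma vecMulVec_mul' (A : Matrix n n ℂ) (u v : n → ℂ) :
    vecMulVec u v * A = vecMulVec u (v ᵥ* A) := by
  ext i j
  simp only [Matrix.mul_apply, vecMulVec_apply, vecMul, dotProduct]
  rw [Finset.mul_sum]
  exact Finset.sum_congr rfl fun k _ => by ring

lemma vecMulVec_mul_vecMulVec' (a b c d : n → ℂ) :
    vecMulVec a b * vecMulVec c d = (b ⬝ᵥ c) • vecMulVec a d := by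
  ext i j
  simp only [Matrix.mul_apply, vecMulVec_apply, Matrix.smul_apply, dotProduct,
    smul_eq_mul, Finset.sum_mul]
  exact Finset.sum_congr rfl fun k _ => by ring

lemma trace_vecMulVec' (u v : n → ℂ) :
    (vecMulVec u v).trace = v ⬝ᵥ u := by
  simp only [Matrix.trace, Matrix.diag, vecMulVec_apply, dotProduct]
  exact Finset.sum_congr rfl fun k _ => by ring

end aux

theorem stmt_10 (m : ℕ) (M P : Matrix (Fin m) (Fin m) ℂ) (h : Fin m → ℂ)
    (hM : M.PosDef) (hh : h ≠ 0) (hPd : P.IsDiag) (hPu : IsUnit P)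
    (σsq : ℝ) (hσ : 0 < σsq) :
    ∀ Δ : ℂ,
      Δ = (h ⬝ᵥ ((P * M⁻¹ * M⁻¹ * Pᴴ) *ᵥ star h)) /
          ((σsq : ℂ) + h ⬝ᵥ ((P * M⁻¹ * Pᴴ) *ᵥ star h)) →
      ((M + σsq⁻¹ • (Pᴴ * Matrix.vecMulVec (star h) h * P))⁻¹).trace
        = M⁻¹.trace - Δ ∧ 0 < Δ.re ∧ Δ.im = 0 := by
  intro Δ hΔ
  obtain ⟨u, hu_def⟩ : ∃ u : Fin m → ℂ, u = Pᴴ *ᵥ star h := ⟨_, rfl⟩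
  have hstaru : h ᵥ* P = star u := by
    rw [hu_def, star_mulVec, conjTranspose_conjTranspose, star_star]
  have hu : u ≠ 0 := by
    intro h0
    apply hh
    have hinj : Function.Injective (Pᴴ.mulVec) :=
      mulVec_injective_iff_isUnit.mpr ((Matrix.isUnit_conjTranspose P).mpr hPu)
    have : star h = 0 := by
      apply hinj
      show Pᴴ *ᵥ star h = Pᴴ *ᵥ 0
      rw [mulVec_zero, ← hu_def, h0]
    simpa using congrArg star this
  obtain ⟨W, hW_def⟩ : ∃ W : Matrix (Fin m) (Fin m) ℂ, W = vecMulVec u (star u) :=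
    ⟨_, rfl⟩
  have hW : Pᴴ * vecMulVec (star h) h * P = W := by
    rw [mul_vecMulVec', vecMulVec_mul', hstaru, ← hu_def, hW_def]
  obtain ⟨d, hd_def⟩ : ∃ d : ℂ, d = star u ⬝ᵥ (M⁻¹ *ᵥ u) := ⟨_, rfl⟩
  obtain ⟨nn, hnn_def⟩ : ∃ nn : ℂ, nn = star u ⬝ᵥ ((M⁻¹ * M⁻¹) *ᵥ u) := ⟨_, rfl⟩
  have hMinvPD : M⁻¹.PosDef := hM.inv
  have hd : 0 < d := hd_def ▸ hMinvPD.dotProduct_mulVec_pos hu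
  have hd_re : 0 < d.re := (Complex.lt_def.mp hd).1
  have hd_im : d.im = 0 := ((Complex.lt_def.mp hd).2).symm
  have hMinvH : M⁻¹ᴴ = M⁻¹ := hMinvPD.isHermitian
  have hw : M⁻¹ *ᵥ u ≠ 0 := by
    intro h0
    apply hu
    have hinj : Function.Injective (M⁻¹.mulVec) :=
      mulVec_injective_iff_isUnit.mpr hMinvPD.isUnit
    apply hinj
    simpa using h0
  have hn : 0 < nn := by
    have e : nn = star (M⁻¹ *ᵥ u) ⬝ᵥ (M⁻¹ *ᵥ u) := by
      have e1 : star (M⁻¹ *ᵥ u) = star u ᵥ* M⁻¹ := by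
        rw [star_mulVec, hMinvH]
      rw [e1, hnn_def, ← mulVec_mulVec, dotProduct_mulVec]
    rw [e]
    exact dotProduct_star_self_pos_iff.mpr hw
  have hn_re : 0 < nn.re := (Complex.lt_def.mp hn).1
  have hn_im : nn.im = 0 := ((Complex.lt_def.mp hn).2).symm
  have hnum : h ⬝ᵥ ((P * M⁻¹ * M⁻¹ * Pᴴ) *ᵥ star h) = nn := by
    rw [mul_assoc P M⁻¹ M⁻¹, mul_assoc, ← mulVec_mulVec, ← mulVec_mulVec,
      dotProduct_mulVec, hstaru, ← hu_def, hnn_def]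
  have hden : h ⬝ᵥ ((P * M⁻¹ * Pᴴ) *ᵥ star h) = d := by
    rw [mul_assoc, ← mulVec_mulVec, ← mulVec_mulVec, dotProduct_mulVec,
      hstaru, ← hu_def, hd_def]
  rw [hnum, hden] at hΔ
  have hσ0 : (σsq : ℂ) ≠ 0 := by
    exact_mod_cast ne_of_gt hσ
  have hδ_re : 0 < ((σsq : ℂ) + d).re := by
    simp only [Complex.add_re, Complex.ofReal_re]
    positivity
  have hδ : (σsq : ℂ) + d ≠ 0 := by
    intro h0
    rw [h0] at hδ_re
    simp at hδ_re
  obtain ⟨c, hc_def⟩ : ∃ c : ℂ, c = (σsq : ℂ)⁻¹ := ⟨_, rfl⟩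
  obtain ⟨k, hk_def⟩ : ∃ k : ℂ, k = ((σsq : ℂ) + d)⁻¹ := ⟨_, rfl⟩
  have hMinv : M * M⁻¹ = 1 :=
    mul_nonsing_inv M ((isUnit_iff_isUnit_det M).mp hM.isUnit)
  have hWMW : W * M⁻¹ * W = d • W := by
    rw [hW_def, vecMulVec_mul', vecMulVec_mul_vecMulVec', ← dotProduct_mulVec,
      ← hd_def]
  have key : (M + c • W) * (M⁻¹ - k • (M⁻¹ * W * M⁻¹)) = 1 := by
    have e1 : M * (M⁻¹ * W * M⁻¹) = W * M⁻¹ := by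
      rw [← mul_assoc, ← mul_assoc, hMinv, one_mul]
    have e2 : W * (M⁻¹ * W * M⁻¹) = d • (W * M⁻¹) := by
      rw [← mul_assoc, ← mul_assoc, hWMW, Matrix.smul_mul]
    have hcoef : c - k * (c * d) = k := by
      rw [hc_def, hk_def]
      field_simp
      ring
    simp only [add_mul, mul_sub, Matrix.smul_mul, Matrix.mul_smul, hMinv, e1, e2,
      smul_smul]
    rw [← add_smul, show k + k * (c * d) = c by linear_combination -hcoef]
    abel
  have hsmul : σsq⁻¹ • (Pᴴ * Matrix.vecMulVec (star h) h * P) = c • W := by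
    rw [hW]
    ext i j
    simp [Matrix.smul_apply, Complex.real_smul, hc_def]
  have hAinv : (M + σsq⁻¹ • (Pᴴ * Matrix.vecMulVec (star h) h * P))⁻¹
      = M⁻¹ - k • (M⁻¹ * W * M⁻¹) := by
    rw [hsmul]
    exact inv_eq_right_inv key
  have hΔk : Δ = k * nn := by
    rw [hΔ, hk_def, div_eq_mul_inv, mul_comm]
  have htr : (M⁻¹ - k • (M⁻¹ * W * M⁻¹)).trace = M⁻¹.trace - Δ := by
    rw [trace_sub, trace_smul, trace_mul_cycle]
    rw [show M⁻¹ * M⁻¹ * W = vecMulVec ((M⁻¹ * M⁻¹) *ᵥ u) (star u) by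
      rw [hW_def, mul_vecMulVec']]
    rw [trace_vecMulVec', ← hnn_def, hΔk, smul_eq_mul]
  have hΔr : Δ = ((nn.re / (σsq + d.re) : ℝ) : ℂ) := by
    have hnn_c : ((nn.re : ℝ) : ℂ) = nn := Complex.ext (by simp) (by simp [hn_im])
    have hδ_c : (((σsq + d.re : ℝ)) : ℂ) = (σsq : ℂ) + d :=
      Complex.ext (by simp) (by simp [hd_im])
    rw [hΔ, Complex.ofReal_div, hnn_c, hδ_c]
  refine ⟨by rw [hAinv, htr], ?_, ?_⟩
  · rw [hΔr, Complex.ofReal_re]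
    positivity
  · rw [hΔr, Complex.ofReal_im]
end
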